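/- Fix an IPC formula Q. Let θ = (Z₀, …, Z_N) be a finite sequence of IPC formulas one of whose terms is α = Q(X ⊃ Y) = (X ⊃ Y) ⊃ Q for some IPC formulas X, Y, and set α₀ = QQX = (X ⊃ Q) ⊃ Q and α₁ = QY = Y ⊃ Q. If D(θ) ∨ α₀ and D(θ) ∨ α₁ are both theorems of IPC, then D(θ) is a theorem of IPC. -/

import Mathlib

/-- IPC formulas: propositional variables and the conditional only. -/
inductive IPCForm : Type
  | var : ℕ → IPCForm
  | imp : IPCForm → IPCForm → IPCForm

infixr:60 (priority := high) " ⊃ " => IPCForm.imp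

/-- Hilbert-style IPC derivability from a set of hypotheses. -/
inductive IPCDeriv : Set IPCForm → IPCForm → Prop
  | hyp {Γ : Set IPCForm} {A : IPCForm} : A ∈ Γ → IPCDeriv Γ A
  | peirce {Γ : Set IPCForm} (A B : IPCForm) : IPCDeriv Γ (((A ⊃ B) ⊃ A) ⊃ A)
  | axK {Γ : Set IPCForm} (A B : IPCForm) : IPCDeriv Γ (A ⊃ (B ⊃ A))
  | axS {Γ : Set IPCForm} (A B C : IPCForm) :
      IPCDeriv Γ ((A ⊃ (B ⊃ C)) ⊃ ((A ⊃ B) ⊃ (A ⊃ C)))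
  | mp {Γ : Set IPCForm} {A B : IPCForm} :
      IPCDeriv Γ (A ⊃ B) → IPCDeriv Γ A → IPCDeriv Γ B

/-- Disjunction defined within IPC: A ∨ B := (A ⊃ B) ⊃ B. -/
def IPCForm.disj (A B : IPCForm) : IPCForm := (A ⊃ B) ⊃ B

/-- Multiple disjunction A₀ ∨ ⋯ ∨ A_N, associated to the left. -/
def IPCForm.bigDisj : (N : ℕ) → (Fin (N + 1) → IPCForm) → IPCForm
  | 0, A => A 0
  | N + 1, A => IPCForm.disj (IPCForm.bigDisj N (fun i => A i.castSucc)) (A (Fin.last (N + 1)))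

/-!
Let `D = D(θ)`. By Peirce's law it suffices to derive `D` from the hypothesis `D ⊃ Q`.
Under that hypothesis `D ⊃ α₀` and `D ⊃ α₁` hold (their consequent is `Q`), so the two given
disjunctions yield `α₀ = (X ⊃ Q) ⊃ Q` and `α₁ = Y ⊃ Q`. These combine to `α = (X ⊃ Y) ⊃ Q`,
and `α`, being one of the disjuncts, implies `D`.
-/

namespace IPCDeriv

variable {Γ Δ : Set IPCForm} {A B C : IPCForm}

theorem mono (h : IPCDeriv Γ A) (hΓ : Γ ⊆ Δ) : IPCDeriv Δ A := by
  induction h with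
  | hyp hA => exact hyp (hΓ hA)
  | peirce A B => exact peirce A B
  | axK A B => exact axK A B
  | axS A B C => exact axS A B C
  | mp _ _ ihAB ihA => exact mp ihAB ihA

theorem imp_self (A : IPCForm) : IPCDeriv Γ (A ⊃ A) :=
  mp (mp (axS A (A ⊃ A) A) (axK A (A ⊃ A))) (axK A A)

theorem deduction (h : IPCDeriv (insert A Γ) B) : IPCDeriv Γ (A ⊃ B) := by
  generalize hΔ : insert A Γ = Δ at h
  induction h with
  | @hyp B hB =>
    subst hΔ
    rcases hB with rfl | hB
    · exact imp_self B
    · exact mp (axK B A) (hyp hB)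
  | peirce B C => exact mp (axK _ A) (peirce B C)
  | axK B C => exact mp (axK _ A) (axK B C)
  | axS B C D => exact mp (axK _ A) (axS B C D)
  | @mp B C _ _ ihBC ihB => exact mp (mp (axS A B C) ihBC) ihB

theorem imp_trans (hAB : IPCDeriv Γ (A ⊃ B)) (hBC : IPCDeriv Γ (B ⊃ C)) :
    IPCDeriv Γ (A ⊃ C) := by
  have hΓ : Γ ⊆ insert A Γ := Set.subset_insert A Γ
  exact deduction (mp (hBC.mono hΓ) (mp (hAB.mono hΓ) (hyp (Set.mem_insert A Γ))))

theorem of_insert_imp (h : IPCDeriv (insert (A ⊃ B) Γ) A) : IPCDeriv Γ A :=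
  mp (peirce A B) (deduction h)

theorem imp_disj_left (A B : IPCForm) : IPCDeriv Γ (A ⊃ A.disj B) :=
  deduction <| deduction <|
    mp (hyp (Set.mem_insert _ _)) (hyp (Set.mem_insert_of_mem _ (Set.mem_insert _ _)))

theorem imp_disj_right (A B : IPCForm) : IPCDeriv Γ (B ⊃ A.disj B) :=
  axK B (A ⊃ B)

theorem imp_bigDisj (N : ℕ) (Z : Fin (N + 1) → IPCForm) (k : Fin (N + 1)) :
    IPCDeriv Γ (Z k ⊃ IPCForm.bigDisj N Z) := by
  induction N with
  | zero =>
    obtain rfl : k = 0 := Fin.fin_one_eq_zero k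
    exact imp_self _
  | succ N ih =>
    induction k using Fin.lastCases with
    | last => exact imp_disj_right _ _
    | cast i => exact imp_trans (ih (fun j => Z j.castSucc) i) (imp_disj_left _ _)

theorem of_disj_of_imp (h : IPCDeriv Γ (A.disj (B ⊃ C))) (hAC : IPCDeriv Γ (A ⊃ C)) :
    IPCDeriv Γ (B ⊃ C) :=
  mp h (imp_trans hAC (axK C B))

theorem imp_imp_of_imp_imp_of_imp (hAC : IPCDeriv Γ ((A ⊃ C) ⊃ C)) (hBC : IPCDeriv Γ (B ⊃ C)) :
    IPCDeriv Γ ((A ⊃ B) ⊃ C) := by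
  have hΓ : Γ ⊆ insert (A ⊃ B) Γ := Set.subset_insert _ Γ
  exact deduction (mp (hAC.mono hΓ) (imp_trans (hyp (Set.mem_insert _ Γ)) (hBC.mono hΓ)))

end IPCDeriv

open IPCDeriv

/-- Rule A is a derived rule of IPC. -/
theorem ipc_ruleA (Q : IPCForm) (N : ℕ) (Z : Fin (N + 1) → IPCForm) (X Y : IPCForm)
    (hterm : ∃ k : Fin (N + 1), Z k = ((X ⊃ Y) ⊃ Q))
    (h0 : IPCDeriv ∅ ((IPCForm.bigDisj N Z).disj ((X ⊃ Q) ⊃ Q)))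
    (h1 : IPCDeriv ∅ ((IPCForm.bigDisj N Z).disj (Y ⊃ Q))) :
    IPCDeriv ∅ (IPCForm.bigDisj N Z) := by
  obtain ⟨k, hk⟩ := hterm
  set D := IPCForm.bigDisj N Z
  set Γ : Set IPCForm := insert (D ⊃ Q) ∅
  suffices IPCDeriv Γ D from of_insert_imp this
  have hDQ : IPCDeriv Γ (D ⊃ Q) := hyp (Set.mem_insert _ _)
  have hα₀ : IPCDeriv Γ ((X ⊃ Q) ⊃ Q) := of_disj_of_imp (h0.mono (Set.empty_subset Γ)) hDQ
  have hα₁ : IPCDeriv Γ (Y ⊃ Q) := of_disj_of_imp (h1.mono (Set.empty_subset Γ)) hDQ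
  have hαD : IPCDeriv Γ (((X ⊃ Y) ⊃ Q) ⊃ D) := hk ▸ imp_bigDisj N Z k
  exact mp hαD (imp_imp_of_imp_imp_of_imp hα₀ hα₁)
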